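/- For z ≥ 0 and integer m ≥ 2, define G_m on (0,∞)² by G_m(ρ, ρ₀) = (ρρ₀/(2πh²)) I_m'(mρ/h) K_m'(mρ₀/h) for ρ < ρ₀ and (ρρ₀/(2πh²)) K_m'(mρ/h) I_m'(mρ₀/h) for ρ > ρ₀. Then for ρ ≠ ρ₀, the function u(ρ) = G_m(ρ, ρ₀) solves the ODE (ρ/(1+κ²ρ²)) u'' + ((1 - κ²ρ²)/(1+κ²ρ²)²) u' - (m²/ρ) u = 0, where κ = 1/h. -/

import Mathlib

/-!
Write `w` for `I_m` on the branch `ρ < ρ₀` and for `K_m` on the branch `ρ > ρ₀`; there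
`u ρ = C ρ w'(z)` with `z = mρ/h`. Both functions solve the modified Bessel equation
`z² w'' + z w' = (z² + m²) w`, which follows from their integral representations by differentiating
under the integral sign and integrating an exact derivative whose boundary values vanish. The Bessel
equation collapses `u'` to `C (z + m²/z) w(z)`, so `u''` only involves `w` and `w'`, and the helical
equation becomes an algebraic identity in `w(z)` and `w'(z)`.
-/

open Real MeasureTheory

/-- Modified Bessel function of the first kind of real order ν (Schläfli's
integral representation, valid for z > 0). -/
noncomputable def besselI (ν z : ℝ) : ℝ :=
  (1 / π) * ∫ θ in (0:ℝ)..π, Real.exp (z * Real.cos θ) * Real.cos (ν * θ)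
    - (Real.sin (ν * π) / π) *
      ∫ t in Set.Ioi (0:ℝ), Real.exp (-(z * Real.cosh t) - ν * t)

/-- Modified Bessel function of the second kind of real order ν
(Basset's integral representation, valid for z > 0). -/
noncomputable def besselK (ν z : ℝ) : ℝ :=
  ∫ t in Set.Ioi (0:ℝ), Real.exp (-(z * Real.cosh t)) * Real.cosh (ν * t)

open Set Filter Topology

def IsModifiedBesselSolution (ν : ℝ) (w : ℝ → ℝ) : Prop :=
  ∀ x, 0 < x → DifferentiableAt ℝ w x ∧ DifferentiableAt ℝ (deriv w) x ∧
    x ^ 2 * deriv (deriv w) x + x * deriv w x = (x ^ 2 + ν ^ 2) * w x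

theorem isModifiedBesselSolution_of_hasDerivAt {ν : ℝ} {w w' w'' : ℝ → ℝ}
    (hw : ∀ x, 0 < x → HasDerivAt w (w' x) x) (hw' : ∀ x, 0 < x → HasDerivAt w' (w'' x) x)
    (hode : ∀ x, 0 < x → x ^ 2 * w'' x + x * w' x = (x ^ 2 + ν ^ 2) * w x) :
    IsModifiedBesselSolution ν w := by
  intro x hx
  have hderiv : deriv w =ᶠ[𝓝 x] w' :=
    eventually_of_mem (Ioi_mem_nhds hx) fun y hy => (hw y hy).deriv
  refine ⟨(hw x hx).differentiableAt,
    ((hw' x hx).congr_of_eventuallyEq hderiv).differentiableAt, ?_⟩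
  rw [hderiv.deriv_eq, (hw' x hx).deriv, (hw x hx).deriv]
  exact hode x hx

namespace IsModifiedBesselSolution

variable {ν : ℝ} {w : ℝ → ℝ}

/-- The Bessel equation turns `w' + z w''` back into `(z + ν² / z) w`, so the derivative of
`r ↦ C r w'(c r)` involves no second derivative of `w`. -/
theorem hasDerivAt_mul_deriv_comp (hw : IsModifiedBesselSolution ν w) (C : ℝ) {c r : ℝ}
    (hc : 0 < c) (hr : 0 < r) :
    HasDerivAt (fun r => C * r * deriv w (c * r))
      (C * (c * r + ν ^ 2 / (c * r)) * w (c * r)) r := by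
  have hz : 0 < c * r := mul_pos hc hr
  obtain ⟨-, hw', hode⟩ := hw _ hz
  have hlin : HasDerivAt (fun r => c * r) c r := by simpa using (hasDerivAt_id r).const_mul c
  refine HasDerivAt.congr_deriv (f := fun r => C * r * deriv w (c * r))
    (((hasDerivAt_id r).const_mul C).mul (hw'.hasDerivAt.comp r hlin)) ?_
  simp only [id, mul_one]
  field_simp
  linear_combination C * hode

theorem helical_ode (hw : IsModifiedBesselSolution ν w) (hν : 0 < ν) {h C ρ : ℝ}
    (hh : 0 < h) (hρ : 0 < ρ) {u : ℝ → ℝ}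
    (hu : u =ᶠ[𝓝 ρ] fun r => C * r * deriv w (ν * r / h)) :
    (ρ / (1 + (1 / h) ^ 2 * ρ ^ 2)) * deriv (deriv u) ρ +
        ((1 - (1 / h) ^ 2 * ρ ^ 2) / (1 + (1 / h) ^ 2 * ρ ^ 2) ^ 2) * deriv u ρ -
        (ν ^ 2 / ρ) * u ρ = 0 := by
  simp only [mul_div_right_comm ν] at hu
  set c := ν / h
  have hc : 0 < c := div_pos hν hh
  set v := fun r => C * (c * r + ν ^ 2 / (c * r)) * w (c * r)
  have hu' : deriv u =ᶠ[𝓝 ρ] v := hu.deriv.trans <|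
    eventually_of_mem (Ioi_mem_nhds hρ) fun r hr => (hw.hasDerivAt_mul_deriv_comp C hc hr).deriv
  have hz : 0 < c * ρ := mul_pos hc hρ
  have hlin : HasDerivAt (fun r => c * r) c ρ := by simpa using (hasDerivAt_id ρ).const_mul c
  have hv : HasDerivAt v (C * (c - ν ^ 2 * c / (c * ρ) ^ 2) * w (c * ρ) +
      C * (c * ρ + ν ^ 2 / (c * ρ)) * (deriv w (c * ρ) * c)) ρ := by
    refine HasDerivAt.congr_deriv (f := v)
      (((hlin.add ((hasDerivAt_const ρ (ν ^ 2)).div hlin hz.ne')).const_mul C).mul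
        ((hw _ hz).1.hasDerivAt.comp ρ hlin)) ?_
    simp only [Pi.add_apply, Pi.div_apply]
    ring
  rw [hu'.deriv_eq, hv.deriv, hu'.eq_of_nhds, hu.eq_of_nhds]
  simp only [v, c]
  field_simp
  ring

end IsModifiedBesselSolution

noncomputable def schlafliMoment (ν : ℝ) (n : ℕ) (x : ℝ) : ℝ :=
  ∫ θ in 0..π, cos θ ^ n * exp (x * cos θ) * cos (ν * θ)

theorem hasDerivAt_schlafliMoment (ν : ℝ) (n : ℕ) (x : ℝ) :
    HasDerivAt (schlafliMoment ν n) (schlafliMoment ν (n + 1) x) x := by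
  have h_bound : ∀ᵐ θ, θ ∈ uIoc 0 π → ∀ y ∈ Metric.ball x 1,
      ‖cos θ ^ (n + 1) * exp (y * cos θ) * cos (ν * θ)‖ ≤ exp (|x| + 1) := by
    refine Eventually.of_forall fun θ _ y hy => ?_
    have hy : |y| ≤ |x| + 1 := by
      have := abs_sub_abs_le_abs_sub y x
      rw [Metric.mem_ball, Real.dist_eq] at hy
      linarith
    have hexp : exp (y * cos θ) ≤ exp (|x| + 1) := by
      refine exp_le_exp.2 <| (le_abs_self _).trans ?_
      rw [abs_mul]
      nlinarith [abs_cos_le_one θ, abs_nonneg y, abs_nonneg (cos θ)]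
    rw [norm_mul, norm_mul, norm_pow, Real.norm_of_nonneg (exp_pos _).le]
    calc ‖cos θ‖ ^ (n + 1) * exp (y * cos θ) * ‖cos (ν * θ)‖ ≤ 1 * exp (|x| + 1) * 1 := by
          gcongr
          · exact pow_le_one₀ (norm_nonneg _) (abs_cos_le_one θ)
          · exact abs_cos_le_one _
      _ = exp (|x| + 1) := by ring
  have h_diff : ∀ᵐ θ, θ ∈ uIoc 0 π → ∀ y ∈ Metric.ball x 1,
      HasDerivAt (fun y => cos θ ^ n * exp (y * cos θ) * cos (ν * θ))
        (cos θ ^ (n + 1) * exp (y * cos θ) * cos (ν * θ)) y := by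
    refine Eventually.of_forall fun θ _ y _ => ?_
    have := (((hasDerivAt_mul_const (x := y) (cos θ)).exp).const_mul (cos θ ^ n)).mul_const
      (cos (ν * θ))
    exact this.congr_deriv (by ring)
  exact (intervalIntegral.hasDerivAt_integral_of_dominated_loc_of_deriv_le
    (Metric.ball_mem_nhds x one_pos)
    (Eventually.of_forall fun y => (by fun_prop : Continuous _).aestronglyMeasurable)
    ((by fun_prop : Continuous _).intervalIntegrable _ _)
    (by fun_prop : Continuous _).aestronglyMeasurable h_bound intervalIntegrable_const
    h_diff).2

/-- Integrating by parts against the boundary term `exp (x cos θ) (ν sin νθ - x sin θ cos νθ)`,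
which vanishes at `θ = 0` and, for integral `ν`, at `θ = π`. -/
theorem schlafliMoment_bessel (m : ℕ) (x : ℝ) :
    x ^ 2 * schlafliMoment m 2 x + x * schlafliMoment m 1 x =
      (x ^ 2 + (m : ℝ) ^ 2) * schlafliMoment m 0 x := by
  set ν : ℝ := (m : ℝ)
  set F : ℝ → ℝ := fun θ => exp (x * cos θ) * (ν * sin (ν * θ) - x * (sin θ * cos (ν * θ)))
  set a : ℕ → ℝ → ℝ := fun n θ => cos θ ^ n * exp (x * cos θ) * cos (ν * θ)
  have hF : ∀ θ ∈ uIcc 0 π, HasDerivAt F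
      ((x ^ 2 + ν ^ 2) * a 0 θ - x * a 1 θ - x ^ 2 * a 2 θ) θ := by
    intro θ _
    have hlin : HasDerivAt (fun θ => ν * θ) ν θ := by
      simpa using (hasDerivAt_id θ).const_mul ν
    have := ((hasDerivAt_cos θ).const_mul x).exp.mul
      ((hlin.sin.const_mul ν).sub (((hasDerivAt_sin θ).mul hlin.cos).const_mul x))
    refine this.congr_deriv ?_
    simp only [a, Pi.sub_apply, Pi.mul_apply]
    linear_combination exp (x * cos θ) * cos (ν * θ) * x ^ 2 * sin_sq θ
  have hint : ∀ n, IntervalIntegrable (a n) volume 0 π := fun n =>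
    (by fun_prop : Continuous (a n)).intervalIntegrable _ _
  have hFTC := intervalIntegral.integral_eq_sub_of_hasDerivAt hF
    ((((hint 0).const_mul _).sub ((hint 1).const_mul _)).sub ((hint 2).const_mul _))
  rw [intervalIntegral.integral_sub (((hint 0).const_mul _).sub ((hint 1).const_mul _))
      ((hint 2).const_mul _),
    intervalIntegral.integral_sub ((hint 0).const_mul _) ((hint 1).const_mul _),
    intervalIntegral.integral_const_mul, intervalIntegral.integral_const_mul,
    intervalIntegral.integral_const_mul] at hFTC
  have hFπ : F π = 0 := by simp [F, ν, sin_nat_mul_pi]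
  have hF0 : F 0 = 0 := by simp [F]
  simp only [hFπ, hF0, sub_zero] at hFTC
  simp only [schlafliMoment]
  linear_combination -hFTC

theorem besselI_natCast_eq (m : ℕ) : besselI m = fun x => π⁻¹ * schlafliMoment m 0 x := by
  ext x
  simp [besselI, schlafliMoment, sin_nat_mul_pi]

theorem isModifiedBesselSolution_besselI (m : ℕ) : IsModifiedBesselSolution m (besselI m) := by
  rw [besselI_natCast_eq]
  refine isModifiedBesselSolution_of_hasDerivAt
    (fun x _ => (hasDerivAt_schlafliMoment _ 0 x).const_mul π⁻¹)
    (fun x _ => (hasDerivAt_schlafliMoment _ 1 x).const_mul π⁻¹) fun x _ => ?_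
  linear_combination π⁻¹ * schlafliMoment_bessel m x

noncomputable def bassetMoment (ν : ℝ) (n : ℕ) (x : ℝ) : ℝ :=
  ∫ t in Ioi 0, cosh t ^ n * exp (-(x * cosh t)) * cosh (ν * t)

theorem sq_div_four_le_cosh (t : ℝ) : t ^ 2 / 4 ≤ cosh t := by
  rw [← cosh_abs, ← sq_abs, cosh_eq]
  nlinarith [quadratic_le_exp_of_nonneg (abs_nonneg t), exp_pos (-|t|), abs_nonneg t]

theorem cosh_le_exp_of_nonneg {t : ℝ} (ht : 0 ≤ t) : cosh t ≤ exp t := by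
  rw [cosh_eq]
  linarith [exp_le_exp.2 (neg_le_self ht)]

/-- The constant comes from `(n + ν) t ≤ 2 (n + ν)² / a + a t² / 8`. -/
theorem cosh_pow_mul_exp_mul_cosh_le {ν : ℝ} (hν : 0 ≤ ν) (n : ℕ) {a y t : ℝ} (ha : 0 < a)
    (hy : a ≤ y) (ht : 0 ≤ t) :
    cosh t ^ n * exp (-(y * cosh t)) * cosh (ν * t) ≤
      exp (2 * (n + ν) ^ 2 / a) * exp (-(a / 8) * t ^ 2) := by
  have hpow : cosh t ^ n ≤ exp (n * t) := by
    rw [exp_nat_mul]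
    exact pow_le_pow_left₀ (cosh_pos t).le (cosh_le_exp_of_nonneg ht) n
  have hdecay : exp (-(y * cosh t)) ≤ exp (-(a * (t ^ 2 / 4))) :=
    exp_le_exp.2 <| neg_le_neg <| mul_le_mul hy (sq_div_four_le_cosh t) (by positivity)
      (ha.le.trans hy)
  calc cosh t ^ n * exp (-(y * cosh t)) * cosh (ν * t)
      ≤ exp (n * t) * exp (-(a * (t ^ 2 / 4))) * exp (ν * t) := by
        gcongr
        exact cosh_le_exp_of_nonneg (mul_nonneg hν ht)
    _ ≤ exp (2 * (n + ν) ^ 2 / a) * exp (-(a / 8) * t ^ 2) := by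
        rw [← exp_add, ← exp_add, ← exp_add]
        refine exp_le_exp.2 ?_
        have key : (n + ν) * t ≤ 2 * (n + ν) ^ 2 / a + a / 8 * t ^ 2 := by
          rw [div_add' _ _ _ ha.ne', le_div_iff₀ ha]
          nlinarith [sq_nonneg (4 * (n + ν) - a * t)]
        nlinarith

theorem integrableOn_cosh_pow_mul_exp_mul_cosh {ν : ℝ} (hν : 0 ≤ ν) (n : ℕ) {x : ℝ}
    (hx : 0 < x) :
    IntegrableOn (fun t => cosh t ^ n * exp (-(x * cosh t)) * cosh (ν * t)) (Ioi 0) := by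
  refine (((integrable_exp_neg_mul_sq (by positivity : 0 < x / 8)).const_mul
    (exp (2 * (n + ν) ^ 2 / x))).integrableOn).mono'
    (by fun_prop : Continuous _).aestronglyMeasurable ?_
  filter_upwards [ae_restrict_mem measurableSet_Ioi] with t ht
  rw [Real.norm_of_nonneg (by positivity)]
  exact cosh_pow_mul_exp_mul_cosh_le hν n hx le_rfl (le_of_lt ht)

theorem hasDerivAt_bassetMoment {ν : ℝ} (hν : 0 ≤ ν) (n : ℕ) {x : ℝ} (hx : 0 < x) :
    HasDerivAt (bassetMoment ν n) (-bassetMoment ν (n + 1) x) x := by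
  have hx2 : 0 < x / 2 := half_pos hx
  have h_bound : ∀ᵐ t ∂volume.restrict (Ioi 0), ∀ y ∈ Metric.ball x (x / 2),
      ‖-(cosh t ^ (n + 1) * exp (-(y * cosh t)) * cosh (ν * t))‖ ≤
        exp (2 * ((n + 1 : ℕ) + ν) ^ 2 / (x / 2)) * exp (-(x / 2 / 8) * t ^ 2) := by
    filter_upwards [ae_restrict_mem measurableSet_Ioi] with t ht y hy
    have hy : x / 2 ≤ y := by
      rw [Metric.mem_ball, Real.dist_eq, abs_lt] at hy
      linarith
    rw [norm_neg, Real.norm_of_nonneg (by positivity)]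
    exact cosh_pow_mul_exp_mul_cosh_le hν (n + 1) hx2 hy (le_of_lt ht)
  have h_diff : ∀ᵐ t ∂volume.restrict (Ioi 0), ∀ y ∈ Metric.ball x (x / 2),
      HasDerivAt (fun y => cosh t ^ n * exp (-(y * cosh t)) * cosh (ν * t))
        (-(cosh t ^ (n + 1) * exp (-(y * cosh t)) * cosh (ν * t))) y := by
    refine Eventually.of_forall fun t y _ => ?_
    have := ((((hasDerivAt_mul_const (x := y) (cosh t)).neg).exp).const_mul
      (cosh t ^ n)).mul_const (cosh (ν * t))
    exact this.congr_deriv (by simp only [Pi.neg_apply]; ring)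
  have := (hasDerivAt_integral_of_dominated_loc_of_deriv_le
    (F := fun y t => cosh t ^ n * exp (-(y * cosh t)) * cosh (ν * t)) (Metric.ball_mem_nhds x hx2)
    (Eventually.of_forall fun y => (by fun_prop : Continuous _).aestronglyMeasurable)
    (integrableOn_cosh_pow_mul_exp_mul_cosh hν n hx)
    (by fun_prop : Continuous _).aestronglyMeasurable h_bound
    ((integrable_exp_neg_mul_sq (by positivity)).const_mul _).integrableOn h_diff).2
  rwa [integral_neg] at this

theorem tendsto_exp_neg_mul_cosh_mul_atTop_zero {ν : ℝ} (hν : 0 ≤ ν) {x : ℝ} (hx : 0 < x) :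
    Tendsto (fun t => exp (-(x * cosh t)) * (-(x * (sinh t * cosh (ν * t))) - ν * sinh (ν * t)))
      atTop (𝓝 0) := by
  have hgauss : Tendsto (fun t => (x + ν) * (exp (2 * ((1 : ℕ) + ν) ^ 2 / x) *
      exp (-(x / 8) * t ^ 2))) atTop (𝓝 0) := by
    simpa using ((tendsto_exp_atBot.comp <| (tendsto_pow_atTop two_ne_zero).const_mul_atTop_of_neg
      (by linarith : -(x / 8) < 0)).const_mul _).const_mul (x + ν)
  refine squeeze_zero_norm' ?_ hgauss
  filter_upwards [eventually_ge_atTop 0] with t ht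
  have hs : 0 ≤ sinh t := sinh_nonneg_iff.2 ht
  have hsν : 0 ≤ sinh (ν * t) := sinh_nonneg_iff.2 (mul_nonneg hν ht)
  have hsc : sinh t ≤ cosh t := (sinh_lt_cosh t).le
  have hsνc : sinh (ν * t) ≤ cosh t * cosh (ν * t) :=
    (sinh_lt_cosh _).le.trans (le_mul_of_one_le_left (cosh_pos _).le (one_le_cosh t))
  calc ‖exp (-(x * cosh t)) * (-(x * (sinh t * cosh (ν * t))) - ν * sinh (ν * t))‖
      = exp (-(x * cosh t)) * (x * (sinh t * cosh (ν * t)) + ν * sinh (ν * t)) := by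
        have : -(x * (sinh t * cosh (ν * t))) - ν * sinh (ν * t) ≤ 0 := by
          nlinarith [mul_nonneg hx.le (mul_nonneg hs (cosh_pos (ν * t)).le), mul_nonneg hν hsν]
        rw [norm_mul, Real.norm_of_nonneg (exp_pos _).le, Real.norm_eq_abs, abs_of_nonpos this]
        ring
    _ ≤ exp (-(x * cosh t)) * ((x + ν) * (cosh t * cosh (ν * t))) := by
        gcongr
        nlinarith [mul_le_mul_of_nonneg_right hsc (cosh_pos (ν * t)).le]
    _ = (x + ν) * (cosh t ^ 1 * exp (-(x * cosh t)) * cosh (ν * t)) := by ring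
    _ ≤ _ := mul_le_mul_of_nonneg_left (cosh_pow_mul_exp_mul_cosh_le hν 1 hx le_rfl ht)
        (by positivity)

theorem bassetMoment_bessel {ν : ℝ} (hν : 0 ≤ ν) {x : ℝ} (hx : 0 < x) :
    x ^ 2 * bassetMoment ν 2 x - x * bassetMoment ν 1 x =
      (x ^ 2 + ν ^ 2) * bassetMoment ν 0 x := by
  set k : ℕ → ℝ → ℝ := fun n t => cosh t ^ n * exp (-(x * cosh t)) * cosh (ν * t)
  have hG : ∀ t ∈ Ici 0, HasDerivAt
      (fun t => exp (-(x * cosh t)) * (-(x * (sinh t * cosh (ν * t))) - ν * sinh (ν * t)))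
      (x ^ 2 * k 2 t - x * k 1 t - (x ^ 2 + ν ^ 2) * k 0 t) t := by
    intro t _
    have hlin : HasDerivAt (fun t => ν * t) ν t := by
      simpa using (hasDerivAt_id t).const_mul ν
    have := ((hasDerivAt_cosh t).const_mul x).neg.exp.mul
      ((((hasDerivAt_sinh t).mul hlin.cosh).const_mul x).neg.sub (hlin.sinh.const_mul ν))
    refine this.congr_deriv ?_
    simp only [k, Pi.sub_apply, Pi.mul_apply, Pi.neg_apply]
    linear_combination exp (-(x * cosh t)) * cosh (ν * t) * x ^ 2 * sinh_sq t
  have hint : ∀ n, IntegrableOn (k n) (Ioi 0) := fun n =>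
    integrableOn_cosh_pow_mul_exp_mul_cosh hν n hx
  have hFTC := integral_Ioi_of_hasDerivAt_of_tendsto' hG
    ((((hint 2).const_mul _).sub ((hint 1).const_mul _)).sub ((hint 0).const_mul _))
    (tendsto_exp_neg_mul_cosh_mul_atTop_zero hν hx)
  rw [integral_sub, integral_sub, integral_const_mul, integral_const_mul,
    integral_const_mul] at hFTC
  · simpa [sub_eq_zero, k, bassetMoment] using hFTC
  all_goals first
    | exact (hint _).const_mul _
    | exact ((hint 2).const_mul _).sub ((hint 1).const_mul _)

theorem besselK_eq_bassetMoment (ν : ℝ) : besselK ν = bassetMoment ν 0 := by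
  ext x
  simp [besselK, bassetMoment]

theorem isModifiedBesselSolution_besselK {ν : ℝ} (hν : 0 ≤ ν) :
    IsModifiedBesselSolution ν (besselK ν) := by
  rw [besselK_eq_bassetMoment]
  refine isModifiedBesselSolution_of_hasDerivAt (fun x hx => hasDerivAt_bassetMoment hν 0 hx)
    (fun x hx => (hasDerivAt_bassetMoment hν 1 hx).neg.congr_deriv (neg_neg _)) fun x hx => ?_
  linear_combination bassetMoment_bessel hν hx

theorem stmt_11_general (h ρ₀ : ℝ) (hh : 0 < h) (m : ℕ) (hm : 2 ≤ m)
    (u : ℝ → ℝ)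
    (hu : ∀ ρ, u ρ =
      if ρ < ρ₀ then
        (ρ * ρ₀ / (2 * π * h ^ 2)) * deriv (besselI m) (m * ρ / h) *
          deriv (besselK m) (m * ρ₀ / h)
      else
        (ρ * ρ₀ / (2 * π * h ^ 2)) * deriv (besselK m) (m * ρ / h) *
          deriv (besselI m) (m * ρ₀ / h)) :
    ∀ ρ : ℝ, 0 < ρ → ρ ≠ ρ₀ →
      (ρ / (1 + (1 / h) ^ 2 * ρ ^ 2)) * deriv (deriv u) ρ +
        ((1 - (1 / h) ^ 2 * ρ ^ 2) / (1 + (1 / h) ^ 2 * ρ ^ 2) ^ 2) * deriv u ρ -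
        ((m : ℝ) ^ 2 / ρ) * u ρ = 0 := by
  intro ρ hρ hne
  have hm₀ : (0 : ℝ) < m := by exact_mod_cast (by omega : 0 < m)
  rcases hne.lt_or_gt with hlt | hgt
  · refine (isModifiedBesselSolution_besselI m).helical_ode hm₀ hh hρ
      (C := ρ₀ / (2 * π * h ^ 2) * deriv (besselK m) (m * ρ₀ / h)) ?_
    filter_upwards [Iio_mem_nhds hlt] with r (hr : r < ρ₀)
    rw [hu, if_pos hr]
    ring
  · refine (isModifiedBesselSolution_besselK m.cast_nonneg).helical_ode hm₀ hh hρ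
      (C := ρ₀ / (2 * π * h ^ 2) * deriv (besselI m) (m * ρ₀ / h)) ?_
    filter_upwards [Ioi_mem_nhds hgt] with r (hr : ρ₀ < r)
    rw [hu, if_neg hr.not_gt]
    ring

/-- The Fourier coefficient G_m(ρ,ρ₀) of the helical Green
function, defined piecewise via products of I_m' and K_m', solves for ρ ≠ ρ₀
the ODE (ρ/(1+κ²ρ²)) u'' + ((1-κ²ρ²)/(1+κ²ρ²)²) u' - (m²/ρ) u = 0, κ = 1/h. -/
theorem stmt_11 (h ρ₀ : ℝ) (hh : 0 < h) (hρ₀ : 0 < ρ₀) (m : ℕ) (hm : 2 ≤ m)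
    (u : ℝ → ℝ)
    (hu : ∀ ρ, u ρ =
      if ρ < ρ₀ then
        (ρ * ρ₀ / (2 * π * h ^ 2)) * deriv (besselI m) (m * ρ / h) *
          deriv (besselK m) (m * ρ₀ / h)
      else
        (ρ * ρ₀ / (2 * π * h ^ 2)) * deriv (besselK m) (m * ρ / h) *
          deriv (besselI m) (m * ρ₀ / h)) :
    ∀ ρ : ℝ, 0 < ρ → ρ ≠ ρ₀ →
      (ρ / (1 + (1 / h) ^ 2 * ρ ^ 2)) * deriv (deriv u) ρ +
        ((1 - (1 / h) ^ 2 * ρ ^ 2) / (1 + (1 / h) ^ 2 * ρ ^ 2) ^ 2) * deriv u ρ -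
        ((m : ℝ) ^ 2 / ρ) * u ρ = 0 :=
  stmt_11_general h ρ₀ hh m hm u hu
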